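/- Let B > 0 and let f₀ = (1/(2B)) 𝟙_{(−B,B)} be the uniform density on (−B,B). Let θ₁, θ₂ : ℝ → ℝ be continuous, nonnegative, and even with θᵢ(r) = 0 whenever |r| ≥ B (i = 1, 2). If μ_{θ₁}[f₀; a] = μ_{θ₂}[f₀; a] for every a ∈ (0,B), then θ₁ = θ₂. (In other words, for the fixed uniform initial opinion density, the initial rates of change of the sub-threshold opinion fractions measured at all thresholds a ∈ (0,B) uniquely determine the interaction kernel.) -/

import Mathlib

/-!
For the uniform density the measurement rate is explicit: with `T` and `U` the first and
second primitives of `θ` from `0`,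
`μ_θ[f₀; a] = (2B)⁻² (2 U(2B) - 2 U(2B - 2a) + 2 U(B - a) - 2 U(B + a))` for `0 < a < B`.
Since `μ` is linear in `θ`, it suffices to show that `θ = θ₁ - θ₂` vanishes when its rates do.
Differentiating in `a` and using that `T` is constant on `[B, ∞)`, the function
`Θ t = T B - T t` satisfies `Θ t = 2 Θ (2t)` on `(0, B)` and vanishes on `[B, ∞)`; doubling `t`
until it exceeds `B` gives `Θ = 0` on `(0, ∞)`. Hence `θ = T'` vanishes on `(0, ∞)`, and by
evenness and continuity everywhere.
-/

open MeasureTheory Set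

/-- The measurement bracket `Ψ_a(x₁,x₂) = 2·𝟙[(x₁+x₂)/2 ≤ a] − 𝟙[x₁ ≤ a] − 𝟙[x₂ ≤ a]`. -/
noncomputable def Psi (a x₁ x₂ : ℝ) : ℝ :=
  2 * (if (x₁ + x₂) / 2 ≤ a then (1 : ℝ) else 0)
    - (if x₁ ≤ a then (1 : ℝ) else 0) - (if x₂ ≤ a then (1 : ℝ) else 0)

/-- The initial measurement rate `μ_θ[f₀; a]`. -/
noncomputable def mu (θ f₀ : ℝ → ℝ) (a : ℝ) : ℝ :=
  ∫ p : ℝ × ℝ, θ (p.1 - p.2) * f₀ p.1 * f₀ p.2 * Psi a p.1 p.2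

/-- The uniform density on `(-B, B)`. -/
noncomputable def uniformDensity (B x : ℝ) : ℝ :=
  (1 / (2 * B)) * (Set.Ioo (-B) B).indicator 1 x

open intervalIntegral

noncomputable def primitive (f : ℝ → ℝ) (s : ℝ) : ℝ := ∫ x in (0 : ℝ)..s, f x

section Primitive

variable {f : ℝ → ℝ}

@[simp]
lemma primitive_zero : primitive f 0 = 0 := integral_same

lemma integral_eq_primitive_sub (hf : Continuous f) (c d : ℝ) :
    ∫ x in c..d, f x = primitive f d - primitive f c :=
  (integral_interval_sub_left (hf.intervalIntegrable 0 d) (hf.intervalIntegrable 0 c)).symm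

lemma hasDerivAt_primitive (hf : Continuous f) (s : ℝ) : HasDerivAt (primitive f) (f s) s :=
  integral_hasDerivAt_right (hf.intervalIntegrable 0 s)
    hf.stronglyMeasurable.stronglyMeasurableAtFilter hf.continuousAt

lemma continuous_primitive (hf : Continuous f) : Continuous (primitive f) :=
  continuous_iff_continuousAt.2 fun s => (hasDerivAt_primitive hf s).continuousAt

lemma primitive_neg (s : ℝ) : primitive f (-s) = -∫ x in (0 : ℝ)..s, f (-x) := by
  rw [integral_comp_neg, neg_zero, integral_symm, neg_neg]
  rfl

lemma odd_primitive_of_even (hf : Function.Even f) : Function.Odd (primitive f) := fun s => by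
  simp only [primitive_neg, show ∀ x, f (-x) = f x from hf]
  rfl

lemma even_primitive_of_odd (hf : Function.Odd f) : Function.Even (primitive f) := fun s => by
  simp only [primitive_neg, show ∀ x, f (-x) = -f x from hf, intervalIntegral.integral_neg, neg_neg]
  rfl

lemma primitive_eq_of_forall_Icc_eq_zero (hf : Continuous f) {b s : ℝ} (hbs : b ≤ s)
    (h : ∀ x ∈ Icc b s, f x = 0) : primitive f s = primitive f b := by
  rw [← sub_eq_zero, ← integral_eq_primitive_sub hf, integral_congr (g := 0)]
  · simp
  · intro x hx
    rw [uIcc_of_le hbs] at hx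
    exact h x hx

end Primitive

lemma integral_comp_sub_min {g : ℝ → ℝ} (hg : Continuous g) {a B : ℝ} (ha₀ : 0 ≤ a)
    (haB : a ≤ B) :
    ∫ x in (-B)..B, g (x - min B (2 * a - x)) =
      primitive g (2 * a - 2 * B) - primitive g (-(2 * B))
        + (primitive g (2 * B - 2 * a) - primitive g (2 * a - 2 * B)) / 2 := by
  have hcont : Continuous fun x => g (x - min B (2 * a - x)) := by fun_prop
  rw [← integral_add_adjacent_intervals (b := 2 * a - B) (hcont.intervalIntegrable _ _)
    (hcont.intervalIntegrable _ _)]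
  have h₁ : ∫ x in (-B)..(2 * a - B), g (x - min B (2 * a - x)) =
      ∫ x in (-B)..(2 * a - B), g (x - B) :=
    integral_congr fun x hx => by
      rw [uIcc_of_le (by linarith)] at hx
      rw [min_eq_left (by linarith [hx.2])]
  have h₂ : ∫ x in (2 * a - B)..B, g (x - min B (2 * a - x)) =
      ∫ x in (2 * a - B)..B, g (2 * x - 2 * a) :=
    integral_congr fun x hx => by
      rw [uIcc_of_le (by linarith)] at hx
      rw [min_eq_right (by linarith [hx.1])]
      ring_nf
  rw [h₁, h₂, integral_comp_sub_right, integral_comp_mul_sub g two_ne_zero,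
    integral_eq_primitive_sub hg, integral_eq_primitive_sub hg, smul_eq_mul]
  ring_nf

lemma eq_zero_of_eq_mul_comp_two_mul {Θ : ℝ → ℝ} {B c : ℝ} (hsat : ∀ t, B ≤ t → Θ t = 0)
    (hdouble : ∀ t ∈ Ioo 0 B, Θ t = c * Θ (2 * t)) {t : ℝ} (ht : 0 < t) : Θ t = 0 := by
  obtain ⟨n, hn⟩ := pow_unbounded_of_one_lt (B / t) one_lt_two
  rw [div_lt_iff₀ ht] at hn
  induction n generalizing t with
  | zero => exact hsat t (by linarith)
  | succ n ih =>
    rcases le_or_gt B t with htB | htB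
    · exact hsat t htB
    · rw [hdouble t ⟨ht, htB⟩, ih (by positivity) (by rwa [← mul_assoc, ← pow_succ]), mul_zero]

lemma eq_zero_of_even_of_forall_pos {f : ℝ → ℝ} (hf : Continuous f) (he : Function.Even f)
    (hpos : ∀ t, 0 < t → f t = 0) : f = 0 := by
  refine Continuous.ext_on (dense_compl_singleton 0) hf continuous_zero fun t ht => ?_
  rcases lt_or_gt_of_ne ht with ht | ht
  · rw [← he]
    exact hpos _ (neg_pos.2 ht)
  · exact hpos t ht

lemma Psi_eq_indicator (a x y : ℝ) :
    Psi a x y = 2 * (Iic (2 * a - x)).indicator 1 y - (Iic a).indicator 1 y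
      - (Iic a).indicator 1 x := by
  have hmid : (x + y) / 2 ≤ a ↔ y ≤ 2 * a - x := by constructor <;> intro <;> linarith
  simp only [Psi, indicator_apply, mem_Iic, hmid, Pi.one_apply]
  ring

lemma abs_Psi_le (a x y : ℝ) : |Psi a x y| ≤ 2 := by
  rw [Psi, abs_le]
  constructor <;> split_ifs <;> norm_num

lemma measurable_Psi (a : ℝ) : Measurable fun p : ℝ × ℝ => Psi a p.1 p.2 := by
  unfold Psi
  refine .sub (.sub (.const_mul (.ite ?_ measurable_const measurable_const) _)
    (.ite ?_ measurable_const measurable_const)) (.ite ?_ measurable_const measurable_const) <;>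
  exact measurableSet_le (by fun_prop) measurable_const

lemma mu_sub {θ₁ θ₂ f₀ : ℝ → ℝ} {a : ℝ}
    (h₁ : Integrable fun p : ℝ × ℝ => θ₁ (p.1 - p.2) * f₀ p.1 * f₀ p.2 * Psi a p.1 p.2)
    (h₂ : Integrable fun p : ℝ × ℝ => θ₂ (p.1 - p.2) * f₀ p.1 * f₀ p.2 * Psi a p.1 p.2) :
    mu (θ₁ - θ₂) f₀ a = mu θ₁ f₀ a - mu θ₂ f₀ a := by
  rw [mu, mu, mu, ← integral_sub h₁ h₂]
  congr 1 with p
  simp only [Pi.sub_apply]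
  ring

lemma mu_integrand_uniformDensity (θ : ℝ → ℝ) (B a : ℝ) (p : ℝ × ℝ) :
    θ (p.1 - p.2) * uniformDensity B p.1 * uniformDensity B p.2 * Psi a p.1 p.2 =
      (Ioo (-B) B ×ˢ Ioo (-B) B).indicator
        (fun p => (2 * B)⁻¹ ^ 2 * (θ (p.1 - p.2) * Psi a p.1 p.2)) p := by
  simp only [uniformDensity, indicator_apply, mem_prod, Pi.one_apply]
  split_ifs <;> simp_all
  ring

section UniformDensity

variable {θ : ℝ → ℝ}

lemma integrableOn_mul_Psi (hc : Continuous θ) (B a : ℝ) :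
    IntegrableOn (fun p : ℝ × ℝ => θ (p.1 - p.2) * Psi a p.1 p.2)
      (Ioo (-B) B ×ˢ Ioo (-B) B) := by
  have hθ : IntegrableOn (fun p : ℝ × ℝ => θ (p.1 - p.2)) (Icc (-B) B ×ˢ Icc (-B) B) :=
    (by fun_prop : Continuous fun p : ℝ × ℝ => θ (p.1 - p.2)).continuousOn.integrableOn_compact
      (isCompact_Icc.prod isCompact_Icc)
  refine (hθ.mono_set (prod_mono Ioo_subset_Icc_self Ioo_subset_Icc_self)).mul_bdd (c := 2)
    (measurable_Psi a).aestronglyMeasurable (ae_of_all _ fun p => ?_)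
  exact (Real.norm_eq_abs _).trans_le (abs_Psi_le a p.1 p.2)

lemma integrable_mu_integrand_uniformDensity (hc : Continuous θ) (B a : ℝ) :
    Integrable fun p : ℝ × ℝ =>
      θ (p.1 - p.2) * uniformDensity B p.1 * uniformDensity B p.2 * Psi a p.1 p.2 := by
  simp_rw [mu_integrand_uniformDensity θ B a]
  exact IntegrableOn.integrable_indicator ((integrableOn_mul_Psi hc B a).const_mul _)
    (measurableSet_Ioo.prod measurableSet_Ioo)

lemma mu_uniformDensity_eq_integral_integral (hc : Continuous θ) (B a : ℝ) :
    mu θ (uniformDensity B) a =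
      (2 * B)⁻¹ ^ 2 * ∫ x in Ioc (-B) B, ∫ y in Ioc (-B) B, θ (x - y) * Psi a x y := by
  simp_rw [mu, mu_integrand_uniformDensity θ B a]
  rw [MeasureTheory.integral_indicator (measurableSet_Ioo.prod measurableSet_Ioo),
    MeasureTheory.integral_const_mul, Measure.volume_eq_prod,
    setIntegral_prod _ (integrableOn_mul_Psi hc B a)]
  simp_rw [integral_Ioc_eq_integral_Ioo]

lemma setIntegral_Ioc_indicator_Iic {g : ℝ → ℝ} {l u c : ℝ} (hlu : l ≤ u) (hlc : l ≤ c) :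
    ∫ y in Ioc l u, (Iic c).indicator g y = ∫ y in l..min u c, g y := by
  rw [setIntegral_indicator measurableSet_Iic, Ioc_inter_Iic, integral_of_le (le_min hlu hlc)]

lemma integral_mul_Psi_eq {B : ℝ} (hc : Continuous θ) {a x : ℝ} (ha₀ : 0 ≤ a) (haB : a ≤ B)
    (hxB : x ≤ B) :
    ∫ y in Ioc (-B) B, θ (x - y) * Psi a x y =
      primitive θ (x + B) + primitive θ (x - a) - 2 * primitive θ (x - min B (2 * a - x))
        - (Iic a).indicator (fun x => primitive θ (x + B) - primitive θ (x - B)) x := by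
  set g : ℝ → ℝ := fun y => θ (x - y)
  have hg : Continuous g := by fun_prop
  have hint : ∀ c, IntegrableOn ((Iic c).indicator g) (Ioc (-B) B) := fun c =>
    hg.integrableOn_Ioc.indicator measurableSet_Iic
  have hsplit : ∀ y, θ (x - y) * Psi a x y = 2 * (Iic (2 * a - x)).indicator g y
      - (Iic a).indicator g y - (Iic a).indicator 1 x * g y := by
    intro y
    simp only [Psi_eq_indicator, indicator_apply, Pi.one_apply, g]
    split_ifs <;> ring
  have hprim : ∀ l m, ∫ y in l..m, g y = primitive θ (x - l) - primitive θ (x - m) :=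
    fun l m => by rw [integral_comp_sub_left (fun t => θ t) x, integral_eq_primitive_sub hc]
  have h₂ : IntegrableOn (fun y => 2 * (Iic (2 * a - x)).indicator g y) (Ioc (-B) B) :=
    (hint _).const_mul 2
  have h₂₁ : IntegrableOn (fun y => 2 * (Iic (2 * a - x)).indicator g y - (Iic a).indicator g y)
      (Ioc (-B) B) :=
    h₂.sub (hint a)
  simp_rw [hsplit]
  rw [integral_sub h₂₁ (hg.integrableOn_Ioc.const_mul _), integral_sub h₂ (hint a),
    MeasureTheory.integral_const_mul, MeasureTheory.integral_const_mul,
    setIntegral_Ioc_indicator_Iic (by linarith) (by linarith),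
    setIntegral_Ioc_indicator_Iic (by linarith) (by linarith), ← integral_of_le (by linarith),
    hprim, hprim, hprim, min_eq_right haB, sub_neg_eq_add]
  by_cases hxa : x ≤ a <;> simp [hxa] <;> ring

lemma integral_integral_mul_Psi_eq {B : ℝ} (hc : Continuous θ) (he : Function.Even θ) {a : ℝ}
    (ha₀ : 0 ≤ a) (haB : a ≤ B) :
    ∫ x in Ioc (-B) B, ∫ y in Ioc (-B) B, θ (x - y) * Psi a x y =
      2 * primitive (primitive θ) (2 * B) - 2 * primitive (primitive θ) (2 * B - 2 * a)
        + 2 * primitive (primitive θ) (B - a) - 2 * primitive (primitive θ) (B + a) := by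
  set T := primitive θ
  have hT : Continuous T := continuous_primitive hc
  have hU : Function.Even (primitive T) := even_primitive_of_odd (odd_primitive_of_even he)
  have hcont : Continuous fun x => T (x + B) + T (x - a) - 2 * T (x - min B (2 * a - x)) := by
    fun_prop
  have hcont' : Continuous fun x => T (x + B) - T (x - B) := by fun_prop
  rw [setIntegral_congr_fun measurableSet_Ioc fun x hx => integral_mul_Psi_eq hc ha₀ haB hx.2,
    integral_sub hcont.integrableOn_Ioc (hcont'.integrableOn_Ioc.indicator measurableSet_Iic),
    setIntegral_Ioc_indicator_Iic (by linarith) (by linarith), min_eq_right haB,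
    ← integral_of_le (by linarith)]
  have hP₁ : ∫ x in (-B)..B, T (x + B) = primitive T (2 * B) := by
    simp [integral_comp_add_right, integral_eq_primitive_sub hT, two_mul]
  have hP₂ : ∫ x in (-B)..B, T (x - a) = primitive T (B - a) - primitive T (B + a) := by
    rw [integral_comp_sub_right, integral_eq_primitive_sub hT, ← hU (B + a)]
    ring_nf
  have hP₃ : ∫ x in (-B)..a, T (x + B) - T (x - B) =
      primitive T (a + B) - primitive T (B - a) + primitive T (2 * B) := by
    rw [intervalIntegral.integral_sub (by apply Continuous.intervalIntegrable; fun_prop)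
      (by apply Continuous.intervalIntegrable; fun_prop), integral_comp_add_right,
      integral_comp_sub_right, integral_eq_primitive_sub hT, integral_eq_primitive_sub hT,
      show a - B = -(B - a) by ring, show -B - B = -(2 * B) by ring, hU, hU]
    simp only [neg_add_cancel, primitive_zero]
    ring
  rw [intervalIntegral.integral_sub, intervalIntegral.integral_add,
    intervalIntegral.integral_const_mul, integral_comp_sub_min hT ha₀ haB, hP₁, hP₂, hP₃,
    hU (2 * B), add_comm a B, show 2 * a - 2 * B = -(2 * B - 2 * a) by ring, hU]
  · ring
  all_goals apply Continuous.intervalIntegrable; fun_prop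

lemma mu_uniformDensity_eq {B : ℝ} (hc : Continuous θ) (he : Function.Even θ) {a : ℝ}
    (ha : a ∈ Ioo 0 B) :
    mu θ (uniformDensity B) a = (2 * B)⁻¹ ^ 2 *
      (2 * primitive (primitive θ) (2 * B) - 2 * primitive (primitive θ) (2 * B - 2 * a)
        + 2 * primitive (primitive θ) (B - a) - 2 * primitive (primitive θ) (B + a)) := by
  rw [mu_uniformDensity_eq_integral_integral hc,
    integral_integral_mul_Psi_eq hc he ha.1.le ha.2.le]

lemma hasDerivAt_mu_uniformDensity {B : ℝ} (hc : Continuous θ) (he : Function.Even θ) {a : ℝ}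
    (ha : a ∈ Ioo 0 B) :
    HasDerivAt (mu θ (uniformDensity B)) ((2 * B)⁻¹ ^ 2 *
      (4 * primitive θ (2 * B - 2 * a) - 2 * primitive θ (B - a)
        - 2 * primitive θ (B + a))) a := by
  have hU := hasDerivAt_primitive (continuous_primitive hc)
  have h₁ := (hU (2 * B - 2 * a)).comp a (((hasDerivAt_id a).const_mul 2).const_sub (2 * B))
  have h₂ := (hU (B - a)).comp_const_sub B a
  have h₃ := (hU (B + a)).comp_const_add B a
  have hE := ((((hasDerivAt_const a (2 * primitive (primitive θ) (2 * B))).sub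
    (h₁.const_mul 2)).add (h₂.const_mul 2)).sub (h₃.const_mul 2)).const_mul ((2 * B)⁻¹ ^ 2)
  refine (hE.congr_deriv (by ring)).congr_of_eventuallyEq ?_
  filter_upwards [Ioo_mem_nhds ha.1 ha.2] with b hb using mu_uniformDensity_eq hc he hb

lemma primitive_eq_of_mu_uniformDensity_eq_zero {B : ℝ} (hc : Continuous θ)
    (he : Function.Even θ) (hsupp : ∀ r, B ≤ |r| → θ r = 0)
    (hmu : ∀ a ∈ Ioo 0 B, mu θ (uniformDensity B) a = 0)
    {t : ℝ} (ht : 0 < t) : primitive θ t = primitive θ B := by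
  set T := primitive θ
  have hsat : ∀ s, B ≤ s → T s = T B := fun s hs =>
    primitive_eq_of_forall_Icc_eq_zero hc hs fun x hx => hsupp x (hx.1.trans (le_abs_self x))
  have hderiv : ∀ a ∈ Ioo 0 B, 4 * T (2 * B - 2 * a) - 2 * T (B - a) - 2 * T (B + a) = 0 := by
    intro a ha
    have hzero : HasDerivAt (mu θ (uniformDensity B)) 0 a :=
      (hasDerivAt_const a 0).congr_of_eventuallyEq <| by
        filter_upwards [Ioo_mem_nhds ha.1 ha.2] with b hb using hmu b hb
    have hB : (2 * B)⁻¹ ^ 2 ≠ 0 := by have := ha.1.trans ha.2; positivity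
    exact (mul_eq_zero.1 ((hasDerivAt_mu_uniformDensity hc he ha).unique hzero)).resolve_left hB
  have hdouble : ∀ s ∈ Ioo 0 B, T B - T s = 2 * (T B - T (2 * s)) := by
    intro s hs
    have h := hderiv (B - s) ⟨by linarith [hs.2], by linarith [hs.1]⟩
    rw [show 2 * B - 2 * (B - s) = 2 * s by ring, show B - (B - s) = s by ring,
      hsat (B + (B - s)) (by linarith [hs.2])] at h
    linarith
  exact (sub_eq_zero.1 (eq_zero_of_eq_mul_comp_two_mul (Θ := fun s => T B - T s)
    (fun s hs => sub_eq_zero.2 (hsat s hs).symm) hdouble ht)).symm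

lemma eq_zero_of_mu_uniformDensity_eq_zero {B : ℝ} (hc : Continuous θ) (he : Function.Even θ)
    (hsupp : ∀ r, B ≤ |r| → θ r = 0) (hmu : ∀ a ∈ Ioo 0 B, mu θ (uniformDensity B) a = 0) :
    θ = 0 := by
  refine eq_zero_of_even_of_forall_pos hc he fun t ht => ?_
  have hconst : (fun _ => primitive θ B) =ᶠ[nhds t] primitive θ := by
    filter_upwards [Ioi_mem_nhds ht] with s hs
    exact (primitive_eq_of_mu_uniformDensity_eq_zero hc he hsupp hmu hs).symm
  exact ((hasDerivAt_primitive hc t).congr_of_eventuallyEq hconst).unique (hasDerivAt_const t _)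

end UniformDensity

theorem stmt10_general (B : ℝ) (θ₁ θ₂ : ℝ → ℝ)
    (hθ₁c : Continuous θ₁) (hθ₁e : ∀ r, θ₁ (-r) = θ₁ r)
    (hθ₁supp : ∀ r : ℝ, B ≤ |r| → θ₁ r = 0)
    (hθ₂c : Continuous θ₂) (hθ₂e : ∀ r, θ₂ (-r) = θ₂ r)
    (hθ₂supp : ∀ r : ℝ, B ≤ |r| → θ₂ r = 0)
    (hdata : ∀ a ∈ Set.Ioo (0:ℝ) B,
      mu θ₁ (uniformDensity B) a = mu θ₂ (uniformDensity B) a) :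
    θ₁ = θ₂ := by
  refine sub_eq_zero.1 (eq_zero_of_mu_uniformDensity_eq_zero (B := B) (hθ₁c.sub hθ₂c)
    (fun r => by simp [hθ₁e, hθ₂e]) (fun r hr => by simp [hθ₁supp r hr, hθ₂supp r hr])
    fun a ha => ?_)
  rw [mu_sub (integrable_mu_integrand_uniformDensity hθ₁c B a)
    (integrable_mu_integrand_uniformDensity hθ₂c B a), hdata a ha, sub_self]

theorem stmt10 (B : ℝ) (hB : 0 < B) (θ₁ θ₂ : ℝ → ℝ)
    (hθ₁c : Continuous θ₁) (hθ₁nn : ∀ r, 0 ≤ θ₁ r) (hθ₁e : ∀ r, θ₁ (-r) = θ₁ r)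
    (hθ₁supp : ∀ r : ℝ, B ≤ |r| → θ₁ r = 0)
    (hθ₂c : Continuous θ₂) (hθ₂nn : ∀ r, 0 ≤ θ₂ r) (hθ₂e : ∀ r, θ₂ (-r) = θ₂ r)
    (hθ₂supp : ∀ r : ℝ, B ≤ |r| → θ₂ r = 0)
    (hdata : ∀ a ∈ Set.Ioo (0:ℝ) B,
      mu θ₁ (uniformDensity B) a = mu θ₂ (uniformDensity B) a) :
    θ₁ = θ₂ :=
  stmt10_general B θ₁ θ₂ hθ₁c hθ₁e hθ₁supp hθ₂c hθ₂e hθ₂supp hdata
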